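/- arXiv:1910.13958 — 2 statements merged into one kernel-verified Lean document; each statement's English description precedes it below -/
import Mathlib

section
/- Let a > b > 0 be real numbers and m a natural number. Then the sum over u from 0 to m of (a + b*u)^{-2} * (a + b*(m-u))^{-2} is at most 8 / (b * (a - b) * (a + b*m)^2). -/
/-!
Write `x u = a + b u`. Since `x u + x (m - u) = 2a + bm =: S` and `S² ≤ 2 (x² + y²)`, each term
`1 / (x² y²)` is at most `(2 / S²) (1 / x² + 1 / y²)`; summing and using the symmetry `u ↦ m - u`
bounds the sum by `(4 / S²) ∑ 1 / (a + bu)²`. Comparing `1 / (a + bu)²` with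
`1 / ((a + b(u - 1)) (a + bu))`, the last sum telescopes to at most `1 / (b (a - b))`, and `S ≥ a + bm`.
-/

open Finset

section

variable {K : Type*} [Field K] [LinearOrder K] [IsStrictOrderedRing K]

lemma inv_sq_mul_inv_sq_le {x y : K} (hx : 0 < x) (hy : 0 < y) :
    (x ^ 2)⁻¹ * (y ^ 2)⁻¹ ≤ 2 / (x + y) ^ 2 * ((x ^ 2)⁻¹ + (y ^ 2)⁻¹) := by
  rw [div_mul_eq_mul_div, le_div_iff₀ (by positivity)]
  field_simp
  nlinarith [sq_nonneg (x - y)]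

lemma sum_inv_sq_mul_inv_sq_reflect_le {x : ℕ → K} {m : ℕ} {S : K} (hx : ∀ u, 0 < x u)
    (hS : ∀ u ≤ m, x u + x (m - u) = S) :
    ∑ u ∈ range (m + 1), (x u ^ 2)⁻¹ * (x (m - u) ^ 2)⁻¹
      ≤ 4 / S ^ 2 * ∑ u ∈ range (m + 1), (x u ^ 2)⁻¹ := by
  have h_reflect : ∑ u ∈ range (m + 1), (x (m - u) ^ 2)⁻¹ = ∑ u ∈ range (m + 1), (x u ^ 2)⁻¹ := by
    simpa using sum_range_reflect (fun u => (x u ^ 2)⁻¹) (m + 1)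
  calc _ ≤ ∑ u ∈ range (m + 1), 2 / S ^ 2 * ((x u ^ 2)⁻¹ + (x (m - u) ^ 2)⁻¹) := by
        refine sum_le_sum fun u hu => ?_
        rw [← hS u (Nat.lt_succ_iff.mp (mem_range.mp hu))]
        exact inv_sq_mul_inv_sq_le (hx u) (hx _)
    _ = 4 / S ^ 2 * ∑ u ∈ range (m + 1), (x u ^ 2)⁻¹ := by
        rw [← mul_sum, sum_add_distrib, h_reflect]
        ring

lemma inv_add_mul_sq_le_sub {a b : K} (hb : 0 < b) (hab : b < a) (u : ℕ) :
    ((a + b * u) ^ 2)⁻¹ ≤ (b * (a - b + b * u))⁻¹ - (b * (a - b + b * (u + 1 : ℕ)))⁻¹ := by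
  have hu : 0 < a - b + b * u := by nlinarith [(Nat.cast_nonneg u : (0 : K) ≤ u)]
  have hu' : a - b + b * (u + 1 : ℕ) = a + b * u := by push_cast; ring
  have hpos : 0 < a + b * u := by linarith
  rw [hu', show (b * (a - b + b * u))⁻¹ - (b * (a + b * u))⁻¹
      = ((a - b + b * u) * (a + b * u))⁻¹ by field_simp; ring]
  gcongr
  nlinarith

lemma sum_range_inv_add_mul_sq_le {a b : K} (hb : 0 < b) (hab : b < a) (n : ℕ) :
    ∑ u ∈ range n, ((a + b * u) ^ 2)⁻¹ ≤ (b * (a - b))⁻¹ := by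
  set f : ℕ → K := fun u => (b * (a - b + b * u))⁻¹
  calc _ ≤ ∑ u ∈ range n, (f u - f (u + 1)) := by
        gcongr with u
        exact inv_add_mul_sq_le_sub hb hab u
    _ = f 0 - f n := sum_range_sub' f n
    _ ≤ f 0 := sub_le_self _ (by positivity)
    _ = (b * (a - b))⁻¹ := by simp [f]

end

theorem stmt0 (a b : ℝ) (hb : 0 < b) (hab : b < a) (m : ℕ) :
    ∑ u ∈ Finset.range (m + 1),
      ((a + b * u) ^ 2)⁻¹ * ((a + b * ((m - u : ℕ) : ℝ)) ^ 2)⁻¹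
      ≤ 8 / (b * (a - b) * (a + b * m) ^ 2) := by
  have ha : 0 < a := hb.trans hab
  have hS : ∀ u ≤ m, (a + b * u) + (a + b * ((m - u : ℕ) : ℝ)) = 2 * a + b * m := by
    intro u hu
    push_cast [hu]
    ring
  calc _ ≤ 4 / (2 * a + b * m) ^ 2 * ∑ u ∈ range (m + 1), ((a + b * u) ^ 2)⁻¹ :=
        sum_inv_sq_mul_inv_sq_reflect_le (x := fun u : ℕ => a + b * u) (fun u => by positivity) hS
    _ ≤ 4 / (a + b * m) ^ 2 * (b * (a - b))⁻¹ := by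
        gcongr
        · linarith
        · exact sum_range_inv_add_mul_sq_le hb hab _
    _ = 4 / (b * (a - b) * (a + b * m) ^ 2) := by
        rw [← div_eq_mul_inv, div_div, mul_comm ((a + b * m) ^ 2)]
    _ ≤ 8 / (b * (a - b) * (a + b * m) ^ 2) := by gcongr; norm_num
end

section
/- Let μ be a probability distribution on ℕ with mean d and exponential tail P(D ≥ (1+a)d) ≤ e^{-c₁ a d} for all a ≥ 1 (some c₁ > 0). Let μ^♯ be the augmented distribution of μ with parameter ε ∈ (0,1). Then there exists d₀(ε, c₁) such that for d ≥ d₀, the mean d^♯ of μ^♯ satisfies d^♯ ≤ (1 + ε/9) d. -/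
/-!
If `k₀ < k_max`, maximality of `k₀` says that the tail `k > k₀`, where `μ♯` uses `√p_k`,
carries first moment `T = ∑_{j > k₀} j √p_j < ε/10`. Hence the unnormalised mean is at most
`(1 - ε/10) d + T` while `Z ≥ (1 - ε/10)(1 - T)`, and the ratio is below `(1 + ε/9) d` once
`(1 - ε) d ≥ 10`.

If `k₀ = k_max`, then `μ♯` is `μ` restricted to `[0, k₀)`, scaled by `1 - ε/10`, plus an atom
`√p_{k₀}` at `k₀`. When `k₀ ≤ (1 + ε/10) d` every distribution on `[0, k₀]` has mean at most
`k₀`. Otherwise `p_{k₀}` is exponentially small: in `d` by concentration when `k₀ ≤ 2d`, and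
in `k₀` by the exponential tail when `k₀ > 2d`. So `k₀ √p_{k₀}` and `d p_{k₀}` are `O(1)`,
which moves the mean by `O(1) ≤ ε d / 10`.
-/

open Real Finset

lemma mul_exp_neg_mul_le {c : ℝ} (hc : 0 < c) (x : ℝ) : x * exp (-(c * x)) ≤ 1 / c := by
  have h := mul_exp_neg_le_exp_neg_one (c * x)
  have h1 : exp (-1) ≤ 1 := exp_le_one_iff.mpr (by norm_num)
  rw [le_div_iff₀ hc]
  linarith [show x * exp (-(c * x)) * c = c * x * exp (-(c * x)) by ring]

lemma mul_sqrt_le_of_le_exp {c x u : ℝ} (hc : 0 < c) (hx : 0 ≤ x) (hu : u ≤ exp (-(c * x))) :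
    x * √u ≤ 2 / c := by
  have hsqrt : √u ≤ exp (-(c / 2 * x)) := by
    calc √u ≤ √(exp (-(c * x))) := sqrt_le_sqrt hu
      _ = exp (-(c / 2 * x)) := by rw [← exp_half]; ring_nf
  calc x * √u ≤ x * exp (-(c / 2 * x)) := mul_le_mul_of_nonneg_left hsqrt hx
    _ ≤ 1 / (c / 2) := mul_exp_neg_mul_le (by positivity) x
    _ = 2 / c := by ring

lemma mul_sqrt_le_of_tail_bounds {c₁ cε d x u : ℝ} (hc₁ : 0 < c₁) (hcε : 0 < cε) (hd : 0 ≤ d)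
    (hdx : d ≤ x) (hconc : u ≤ exp (-(cε * d))) (htail : 2 * d ≤ x → u ≤ exp (-(c₁ * (x - d)))) :
    x * √u ≤ 4 / cε + 4 / c₁ := by
  have hx : 0 ≤ x := hd.trans hdx
  rcases le_total x (2 * d) with hx2 | hx2
  · have hu : u ≤ exp (-(cε / 2 * x)) :=
      hconc.trans (exp_le_exp.mpr (by nlinarith))
    have := mul_sqrt_le_of_le_exp (by positivity) hx hu
    have : 0 < 4 / c₁ := by positivity
    linarith [show 2 / (cε / 2) = 4 / cε by ring]
  · have hu : u ≤ exp (-(c₁ / 2 * x)) :=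
      (htail hx2).trans (exp_le_exp.mpr (by nlinarith))
    have := mul_sqrt_le_of_le_exp (by positivity) hx hu
    have : 0 < 4 / cε := by positivity
    linarith [show 2 / (c₁ / 2) = 4 / c₁ by ring]

lemma summable_of_tsum_ne_zero {f : ℕ → ℝ} (h : ∑' k, f k ≠ 0) : Summable f :=
  by_contra fun hf => h (tsum_eq_zero_of_not_summable hf)

lemma le_tsum_ite_of_le {p : ℕ → ℝ} (hp : ∀ k, 0 ≤ p k) (hs : Summable p) {x : ℝ} {k : ℕ}
    (hk : x ≤ k) : p k ≤ ∑' j : ℕ, if x ≤ (j : ℝ) then p j else 0 := by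
  have hs' : Summable fun j : ℕ => if x ≤ (j : ℝ) then p j else 0 :=
    hs.of_nonneg_of_le (fun j => by split_ifs <;> simp [hp j])
      (fun j => by split_ifs <;> simp [hp j])
  simpa [hk] using hs'.le_tsum k (fun j _ => by split_ifs <;> simp [hp j])

lemma tsum_eq_sum_range_add_of_eq_zero {f : ℕ → ℝ} {n : ℕ} (h : ∀ k, n < k → f k = 0) :
    ∑' k, f k = ∑ k ∈ range n, f k + f n := by
  rw [tsum_eq_sum (s := range (n + 1)) (fun k hk => h k (by simpa using hk)), sum_range_succ]

section LtKmax

variable {a : ℝ} {p : ℕ → ℝ} {k₀ : ℕ}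

lemma tsum_mul_augmented_le (ha : 0 ≤ a) (hp : ∀ k, 0 ≤ p k)
    (hkp : Summable fun k : ℕ => (k : ℝ) * p k)
    (hT : Summable fun j : ℕ => if k₀ + 1 ≤ j then (j : ℝ) * √(p j) else 0) :
    ∑' k : ℕ, (k : ℝ) * (if k ≤ k₀ then a * p k else √(p k)) ≤
      a * ∑' k : ℕ, (k : ℝ) * p k + ∑' j : ℕ, (if k₀ + 1 ≤ j then (j : ℝ) * √(p j) else 0) := by
  have hle : ∀ k : ℕ, (k : ℝ) * (if k ≤ k₀ then a * p k else √(p k)) ≤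
      a * ((k : ℝ) * p k) + (if k₀ + 1 ≤ k then (k : ℝ) * √(p k) else 0) := fun k => by
    have : 0 ≤ a * ((k : ℝ) * p k) := by have := hp k; positivity
    by_cases hk : k ≤ k₀
    · rw [if_pos hk, if_neg (by omega)]; linarith
    · rw [if_neg hk, if_pos (by omega)]; linarith
  have hle_nonneg : ∀ k : ℕ, 0 ≤ (k : ℝ) * (if k ≤ k₀ then a * p k else √(p k)) := fun k => by
    have := hp k; split_ifs <;> positivity
  rw [← tsum_mul_left, ← (hkp.mul_left a).tsum_add hT]
  exact ((hkp.mul_left a).add hT).of_nonneg_of_le hle_nonneg hle |>.tsum_le_tsum hle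
    ((hkp.mul_left a).add hT)

lemma mul_one_sub_le_tsum_augmented (ha0 : 0 ≤ a) (ha1 : a ≤ 1) (hp : ∀ k, 0 ≤ p k)
    (hp1 : ∑' k : ℕ, p k = 1)
    (hT : Summable fun j : ℕ => if k₀ + 1 ≤ j then (j : ℝ) * √(p j) else 0) :
    a * (1 - ∑' j : ℕ, (if k₀ + 1 ≤ j then (j : ℝ) * √(p j) else 0)) ≤
      ∑' k : ℕ, if k ≤ k₀ then a * p k else √(p k) := by
  have hs : Summable p := summable_of_tsum_ne_zero (by rw [hp1]; exact one_ne_zero)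
  have hp_le_sqrt : ∀ k, p k ≤ √(p k) := fun k =>
    le_sqrt_self_iff.mpr (hp1 ▸ hs.le_tsum k fun j _ => hp j)
  have hlower : ∀ k : ℕ, a * (p k - if k₀ + 1 ≤ k then (k : ℝ) * √(p k) else 0) ≤
      if k ≤ k₀ then a * p k else √(p k) := fun k => by
    by_cases hk : k ≤ k₀
    · rw [if_pos hk, if_neg (by omega), sub_zero]
    · rw [if_neg hk, if_pos (by omega)]
      have h1k : (1 : ℝ) ≤ k := by exact_mod_cast (show 1 ≤ k by omega)
      have hneg : p k - k * √(p k) ≤ 0 := by nlinarith [hp_le_sqrt k, sqrt_nonneg (p k)]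
      exact (mul_nonpos_of_nonneg_of_nonpos ha0 hneg).trans (sqrt_nonneg _)
  have hupper : ∀ k : ℕ, (if k ≤ k₀ then a * p k else √(p k)) ≤
      p k + if k₀ + 1 ≤ k then (k : ℝ) * √(p k) else 0 := fun k => by
    by_cases hk : k ≤ k₀
    · rw [if_pos hk, if_neg (by omega)]; nlinarith [hp k]
    · rw [if_neg hk, if_pos (by omega)]
      have h1k : (1 : ℝ) ≤ k := by exact_mod_cast (show 1 ≤ k by omega)
      nlinarith [hp k, sqrt_nonneg (p k)]
  have hg : Summable fun k : ℕ => if k ≤ k₀ then a * p k else √(p k) :=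
    (hs.add hT).of_nonneg_of_le (fun k => by have := hp k; split_ifs <;> positivity) hupper
  calc _ = ∑' k : ℕ, a * (p k - if k₀ + 1 ≤ k then (k : ℝ) * √(p k) else 0) := by
        rw [tsum_mul_left, hs.tsum_sub hT, hp1]
    _ ≤ _ := ((hs.sub hT).mul_left a).tsum_le_tsum hlower hg

end LtKmax

lemma div_le_of_small_tail {ε d N Z T : ℝ} (hε0 : 0 < ε) (hε1 : ε < 1) (hd : 10 ≤ (1 - ε) * d)
    (hT : T < ε / 10) (hN : N ≤ (1 - ε / 10) * d + T) (hZ : (1 - ε / 10) * (1 - T) ≤ Z) :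
    N / Z ≤ (1 + ε / 9) * d := by
  have hZ0 : 0 < Z := lt_of_lt_of_le (by nlinarith) hZ
  have hd0 : 0 ≤ d := by nlinarith
  rw [div_le_iff₀ hZ0]
  have hZd : (1 + ε / 9) * d * ((1 - ε / 10) * (1 - T)) ≤ (1 + ε / 9) * d * Z :=
    mul_le_mul_of_nonneg_left hZ (by positivity)
  -- `(1 + ε/9)(1 - ε/10) = 1 + ε(1 - ε)/90`
  nlinarith [mul_nonneg (mul_nonneg hε0.le (by linarith : (0 : ℝ) ≤ 1 - ε / 10))
      (by linarith : (0 : ℝ) ≤ (1 - ε) * d - 10),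
    mul_nonneg (by linarith : (0 : ℝ) ≤ ε / 10 - T)
      (by positivity : (0 : ℝ) ≤ (1 + ε * (1 - ε) / 90) * d + 1)]

lemma mean_augmented_le_of_lt_kmax {ε d : ℝ} (hε0 : 0 < ε) (hε1 : ε < 1)
    (hd : 10 ≤ (1 - ε) * d) {p q : ℕ → ℝ} {k₀ : ℕ} {Z : ℝ} (hp : ∀ k, 0 ≤ p k)
    (hp1 : ∑' k : ℕ, p k = 1) (hpd : ∑' k : ℕ, (k : ℝ) * p k = d)
    (hk₀lb : ε / 10 ≤ ∑' j : ℕ, (if k₀ ≤ j then (j : ℝ) * √(p j) else 0))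
    (hk₀ub : ∑' j : ℕ, (if k₀ + 1 ≤ j then (j : ℝ) * √(p j) else 0) < ε / 10)
    (hZ : Z = ∑' k : ℕ, if k ≤ k₀ then (1 - ε / 10) * p k else √(p k))
    (hq : ∀ k, q k = (if k ≤ k₀ then (1 - ε / 10) * p k else √(p k)) / Z) :
    ∑' k : ℕ, (k : ℝ) * q k ≤ (1 + ε / 9) * d := by
  have hkp : Summable fun k : ℕ => (k : ℝ) * p k :=
    summable_of_tsum_ne_zero (f := fun k : ℕ => (k : ℝ) * p k) (by rw [hpd]; nlinarith)
  -- a non-summable `tsum` is `0`, so `hk₀lb` forces summability of the tail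
  have hT : Summable fun j : ℕ => if k₀ + 1 ≤ j then (j : ℝ) * √(p j) else 0 :=
    (summable_of_tsum_ne_zero (f := fun j : ℕ => if k₀ ≤ j then (j : ℝ) * √(p j) else 0)
      ((by positivity : 0 < ε / 10).trans_le hk₀lb).ne').of_nonneg_of_le
      (fun j => by split_ifs <;> positivity)
      (fun j => by split_ifs <;> first | exact le_rfl | omega | positivity)
  have hN := hpd ▸ tsum_mul_augmented_le (a := 1 - ε / 10) (by linarith) hp hkp hT
  have hZlb := mul_one_sub_le_tsum_augmented (a := 1 - ε / 10) (by linarith) (by linarith) hp hp1 hT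
  simp_rw [hq, mul_div_assoc']
  rw [tsum_div_const]
  exact div_le_of_small_tail hε0 hε1 hd hk₀ub hN (hZ ▸ hZlb)

lemma tsum_mul_eq_div_of_eq_kmax {p q : ℕ → ℝ} {k₀ : ℕ} {a t Z : ℝ}
    (hZ : Z = (∑' k : ℕ, if k < k₀ then a * p k else 0) + t)
    (hq : ∀ k, q k = (if k < k₀ then a * p k else if k = k₀ then t else 0) / Z) :
    ∑' k : ℕ, (k : ℝ) * q k =
      (a * ∑ k ∈ range k₀, (k : ℝ) * p k + k₀ * t) / (a * ∑ k ∈ range k₀, p k + t) := by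
  have hZ' : Z = a * ∑ k ∈ range k₀, p k + t := by
    rw [hZ, tsum_eq_sum_range_add_of_eq_zero (fun k hk => if_neg hk.not_gt), mul_sum,
      sum_ite_of_true fun k hk => mem_range.mp hk, if_neg (lt_irrefl k₀), add_zero]
  have hzero : ∀ k, k₀ < k → (k : ℝ) * q k = 0 := fun k hk => by
    simp [hq, hk.not_gt, hk.ne']
  rw [tsum_eq_sum_range_add_of_eq_zero hzero, ← hZ', add_div, mul_sum, sum_div]
  simp only [hq, lt_irrefl, if_false, if_true, mul_div_assoc]
  congr 1
  exact sum_congr rfl fun k hk => by rw [if_pos (mem_range.mp hk)]; ring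

lemma div_le_of_le_mul {a S₀ S₁ t x : ℝ} (ha : 0 ≤ a) (hS₀ : 0 ≤ S₀) (ht : 0 < t)
    (h : S₁ ≤ x * S₀) : (a * S₁ + x * t) / (a * S₀ + t) ≤ x := by
  rw [div_le_iff₀ (by positivity)]
  nlinarith

lemma div_le_of_small_atom {ε d S₀ S₁ u t x B C : ℝ} (hε0 : 0 < ε) (hε1 : ε < 1) (hd : 0 ≤ d)
    (hS₀ : S₀ + u = 1) (hS₀nn : 0 ≤ S₀) (hS₁ : S₁ ≤ d) (hu : 0 ≤ u) (hud : u * d ≤ C)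
    (ht : 0 < t) (hxt : x * t ≤ B) (hBC : B + 2 * C ≤ ε * d / 10) :
    ((1 - ε / 10) * S₁ + x * t) / ((1 - ε / 10) * S₀ + t) ≤ (1 + ε / 9) * d := by
  rw [div_le_iff₀ (by nlinarith)]
  obtain rfl : S₀ = 1 - u := by linarith
  have hud' : (1 + ε / 9) * (1 - ε / 10) * (u * d) ≤ 2 * C := by
    have hcoef : (1 + ε / 9) * (1 - ε / 10) ≤ 2 := by nlinarith
    nlinarith [mul_le_mul_of_nonneg_right hcoef (mul_nonneg hu hd)]
  nlinarith [mul_nonneg hd ht.le, mul_nonneg (mul_nonneg hε0.le (sub_nonneg.mpr hε1.le)) hd,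
    mul_le_mul_of_nonneg_left hS₁ (by linarith : (0 : ℝ) ≤ 1 - ε / 10)]

lemma mean_augmented_le_of_eq_kmax {c₁ cε ε d : ℝ} (hc₁ : 0 < c₁) (hcε : 0 < cε) (hε0 : 0 < ε)
    (hε1 : ε < 1) (hd0 : 0 < d) (hd : 6 / cε + 4 / c₁ ≤ ε * d / 10)
    {p q : ℕ → ℝ} {k₀ : ℕ} {Z : ℝ} (hp : ∀ k, 0 ≤ p k) (hp1 : ∑' k : ℕ, p k = 1)
    (hpd : ∑' k : ℕ, (k : ℝ) * p k = d)
    (htail : ∀ a : ℝ, 1 ≤ a →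
      ∑' k : ℕ, (if (1 + a) * d ≤ (k : ℝ) then p k else 0) ≤ exp (-(c₁ * a * d)))
    (hconc : ∑' k : ℕ, (if (1 + ε / 10) * d ≤ (k : ℝ) then p k else 0) ≤ exp (-(cε * d)))
    (hsupp : ∀ k, 0 < p k → k ≤ k₀) (hpk₀ : 0 < p k₀)
    (hZ : Z = (∑' k : ℕ, if k < k₀ then (1 - ε / 10) * p k else 0) + √(p k₀))
    (hq : ∀ k, q k = (if k < k₀ then (1 - ε / 10) * p k
      else if k = k₀ then √(p k₀) else 0) / Z) :
    ∑' k : ℕ, (k : ℝ) * q k ≤ (1 + ε / 9) * d := by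
  have hs : Summable p := summable_of_tsum_ne_zero (by rw [hp1]; exact one_ne_zero)
  have hzero : ∀ k, k₀ < k → p k = 0 := fun k hk =>
    (hp k).eq_or_lt.elim Eq.symm fun h => absurd (hsupp k h) hk.not_ge
  have hS₀ : ∑ k ∈ range k₀, p k + p k₀ = 1 := by
    rw [← hp1, tsum_eq_sum_range_add_of_eq_zero hzero]
  have hS₁ : ∑ k ∈ range k₀, (k : ℝ) * p k + k₀ * p k₀ = d := by
    rw [← hpd, tsum_eq_sum_range_add_of_eq_zero fun k hk => by rw [hzero k hk, mul_zero]]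
  have hS₀nn : 0 ≤ ∑ k ∈ range k₀, p k := sum_nonneg fun k _ => hp k
  have ht : 0 < √(p k₀) := sqrt_pos.mpr hpk₀
  rw [tsum_mul_eq_div_of_eq_kmax hZ hq]
  rcases le_or_gt (k₀ : ℝ) ((1 + ε / 10) * d) with hsmall | hlarge
  · have hS₁le : ∑ k ∈ range k₀, (k : ℝ) * p k ≤ k₀ * ∑ k ∈ range k₀, p k := by
      rw [mul_sum]
      exact sum_le_sum fun k hk =>
        mul_le_mul_of_nonneg_right (by exact_mod_cast (mem_range.mp hk).le) (hp k)
    calc _ ≤ (k₀ : ℝ) := div_le_of_le_mul (by linarith) hS₀nn ht hS₁le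
      _ ≤ (1 + ε / 9) * d := by nlinarith
  · have hpk₀_conc : p k₀ ≤ exp (-(cε * d)) :=
      (le_tsum_ite_of_le hp hs hlarge.le).trans hconc
    have hpk₀_tail : 2 * d ≤ k₀ → p k₀ ≤ exp (-(c₁ * (k₀ - d))) := fun h2d => by
      have hk : (1 + (k₀ / d - 1)) * d = k₀ := by field_simp; ring
      have ha : 1 ≤ (k₀ : ℝ) / d - 1 := by rw [le_sub_iff_add_le, le_div_iff₀ hd0]; linarith
      calc p k₀ ≤ _ := le_tsum_ite_of_le hp hs hk.le
        _ ≤ exp (-(c₁ * (k₀ / d - 1) * d)) := htail _ ha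
        _ = exp (-(c₁ * (k₀ - d))) := by field_simp
    have hx := mul_sqrt_le_of_tail_bounds hc₁ hcε hd0.le (by nlinarith) hpk₀_conc hpk₀_tail
    have hud : p k₀ * d ≤ 1 / cε := by
      have := mul_exp_neg_mul_le hcε d
      nlinarith
    refine div_le_of_small_atom hε0 hε1 hd0.le hS₀ hS₀nn (by nlinarith) (hp k₀) hud ht hx ?_
    linarith [show 4 / cε + 4 / c₁ + 2 * (1 / cε) = 6 / cε + 4 / c₁ by ring]

/-- First-moment bound for the augmented distribution `μ♯`: if `μ = (p k)` has mean `d`,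
an exponential tail, and concentration at level `ε/10`, then the mean of the augmented
distribution `q = μ♯` (defined via the cutoff `k₀`, in either of the two cases
`k₀ < k_max` or `k₀ = k_max`) is at most `(1 + ε/9) d`, for all `d` large enough. -/
theorem stmt14 (c₁ cε : ℝ) (hc₁ : 0 < c₁) (hcε : 0 < cε)
    (ε : ℝ) (hε : ε ∈ Set.Ioo (0 : ℝ) 1) :
    ∃ d₀ : ℝ, 0 < d₀ ∧ ∀ d : ℝ, d₀ ≤ d →
      ∀ (p q : ℕ → ℝ) (k₀ : ℕ) (Z : ℝ),
        (∀ k, 0 ≤ p k) →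
        (∑' k : ℕ, p k = 1) →
        (∑' k : ℕ, (k : ℝ) * p k = d) →
        -- exponential tail of μ
        (∀ a : ℝ, 1 ≤ a →
          ∑' k : ℕ, (if (1 + a) * d ≤ (k : ℝ) then p k else 0) ≤
            Real.exp (-(c₁ * a * d))) →
        -- concentration of μ at level ε/10
        (∑' k : ℕ, (if (1 + ε / 10) * d ≤ (k : ℝ) then p k else 0) ≤
          Real.exp (-(cε * d))) →
        -- characterization of k₀ = max{k : ∑_{j ≥ k} j √(p j) ≥ ε/10}
        (ε / 10 ≤ ∑' j : ℕ, (if k₀ ≤ j then (j : ℝ) * Real.sqrt (p j) else 0)) →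
        (∀ k : ℕ, k₀ < k →
          ∑' j : ℕ, (if k ≤ j then (j : ℝ) * Real.sqrt (p j) else 0) < ε / 10) →
        -- the two-case definition of the augmented distribution q = μ♯
        (((∃ k, k₀ < k ∧ 0 < p k) ∧
            Z = (∑' k : ℕ, if k ≤ k₀ then (1 - ε / 10) * p k else Real.sqrt (p k)) ∧
            ∀ k, q k = (if k ≤ k₀ then (1 - ε / 10) * p k else Real.sqrt (p k)) / Z)
          ∨ ((∀ k, 0 < p k → k ≤ k₀) ∧ 0 < p k₀ ∧
            Z = (∑' k : ℕ, if k < k₀ then (1 - ε / 10) * p k else 0) + Real.sqrt (p k₀) ∧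
            ∀ k, q k = (if k < k₀ then (1 - ε / 10) * p k
              else if k = k₀ then Real.sqrt (p k₀) else 0) / Z)) →
        ∑' k : ℕ, (k : ℝ) * q k ≤ (1 + ε / 9) * d := by
  obtain ⟨hε0, hε1⟩ := hε
  have h1ε : 0 < 1 - ε := by linarith
  -- the first term serves the case `k₀ < k_max`, the second the case `k₀ = k_max`
  refine ⟨max (10 / (1 - ε)) (10 / ε * (6 / cε + 4 / c₁)),
    lt_max_of_lt_left (by positivity), ?_⟩
  intro d hd p q k₀ Z hp hp1 hpd htail hconc hk₀lb hk₀ub hcase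
  obtain ⟨hd₁, hd₂⟩ := max_le_iff.mp hd
  rcases hcase with ⟨-, hZ, hq⟩ | ⟨hsupp, hpk₀, hZ, hq⟩
  · exact mean_augmented_le_of_lt_kmax hε0 hε1 ((div_le_iff₀' h1ε).mp hd₁) hp hp1 hpd hk₀lb
      (hk₀ub _ k₀.lt_succ_self) hZ hq
  · have hd₂' : 6 / cε + 4 / c₁ ≤ ε * d / 10 := by
      rw [div_mul_eq_mul_div, div_le_iff₀ hε0] at hd₂
      linarith
    have hd0 : 0 < d := (by positivity : (0 : ℝ) < 10 / (1 - ε)).trans_le hd₁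
    exact mean_augmented_le_of_eq_kmax hc₁ hcε hε0 hε1 hd0 hd₂' hp hp1 hpd htail hconc hsupp hpk₀
      hZ hq
end
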